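/- Let λ : ℕ → ℂ with ∑_n ‖λ_n‖ < ∞. Then for every integer k ≥ 1, p_k = ∑ (−1)^k · k · (r_1 + r_2 + ⋯ + r_k − 1)! / (r_1! r_2! ⋯ r_k!) · ∏_{i=1}^{k} (−e_i)^{r_i}, where the sum ranges over all tuples (r_1, …, r_k) of nonnegative integers satisfying r_1 + 2r_2 + ⋯ + k·r_k = k. -/

import Mathlib

/-!
For finitely many numbers, Newton's identities
`p_k = (-1)^(k+1) k e_k - ∑_{0<j<k} (-1)^j e_j p_{k-j}` determine the power sums recursively.
The Waring coefficient `(-1)^k k (ℓ-1)! / ∏ m_i!` of a partition of `k` with `ℓ` parts and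
multiplicities `m_i` satisfies the same recursion, obtained by removing one part, so Waring's
formula holds for every finite multiset; there it is a sum over partitions, which are then
re-indexed by their multiplicity vectors `r`. Apply it to `λ_0, …, λ_{N-1}` and let `N → ∞`:
absolute summability of `λ` makes the family of subset products `∏_{i ∈ S} λ_i` summable, so the
truncated `p_k` and `e_j` converge, and the right-hand side is a polynomial in `e_1, …, e_k`.
-/

open Complex Finset Nat
open Filter Topology

theorem Finset.sum_antidiagonal_filter_fst_mem_Ioo {M : Type*} [AddCommMonoid M] (k : ℕ)
    (f : ℕ → ℕ → M) :
    ∑ a ∈ antidiagonal k with a.1 ∈ Set.Ioo 0 k, f a.1 a.2 = ∑ j ∈ Ioo 0 k, f j (k - j) := by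
  symm
  refine sum_nbij' (fun j => (j, k - j)) Prod.fst ?_ ?_ ?_ ?_ ?_ <;>
    simp +contextual [Set.mem_Ioo] <;> omega

theorem Multiset.sum_map_pow_eq_mul_esymm_sub_sum {R : Type*} [CommRing R] (s : Multiset R)
    {k : ℕ} (hk : 0 < k) :
    (s.map (· ^ k)).sum = (-1) ^ (k + 1) * k * s.esymm k -
      ∑ j ∈ Finset.Ioo 0 k, (-1) ^ j * s.esymm j * (s.map (· ^ (k - j))).sum := by
  classical
  let x : s.ToType → R := fun i => i
  have aeval_psum (m : ℕ) :
      MvPolynomial.aeval x (MvPolynomial.psum s.ToType R m) = (s.map (· ^ m)).sum := by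
    simp only [MvPolynomial.psum, map_sum, map_pow, MvPolynomial.aeval_X]
    rw [Finset.sum_eq_multiset_sum, ← Multiset.map_univ_comp_coe s (· ^ m)]
    rfl
  have aeval_esymm (m : ℕ) :
      MvPolynomial.aeval x (MvPolynomial.esymm s.ToType R m) = s.esymm m := by
    rw [MvPolynomial.aeval_esymm_eq_multiset_esymm, Multiset.map_univ_coe]
  have newton := congrArg (MvPolynomial.aeval x)
    (MvPolynomial.psum_eq_mul_esymm_sub_sum s.ToType R k hk)
  simp only [map_sub, map_mul, map_sum, map_pow, map_neg, map_one, map_natCast, aeval_psum,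
    aeval_esymm] at newton
  rwa [sum_antidiagonal_filter_fst_mem_Ioo k
    (fun a b => (-1) ^ a * s.esymm a * (s.map (· ^ b)).sum)] at newton

theorem Multiset.prod_toFinset_factorial_count_cons {α : Type*} [DecidableEq α] (a : α)
    (s : Multiset α) :
    ∏ i ∈ (a ::ₘ s).toFinset, ((a ::ₘ s).count i)! =
      (s.count a + 1) * ∏ i ∈ s.toFinset, (s.count i)! := by
  have ha : a ∈ (a ::ₘ s).toFinset := by simp
  have hsub : s.toFinset ⊆ (a ::ₘ s).toFinset := by intro i; simp +contextual
  rw [prod_subset (f := fun i => (s.count i)!) hsub fun i _ hi => by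
      simp [Multiset.count_eq_zero.mpr (by simpa using hi)],
    ← mul_prod_erase _ _ ha, ← mul_prod_erase _ (fun i => (s.count i)!) ha,
    Multiset.count_cons_self, factorial_succ, mul_assoc]
  congr 2
  exact prod_congr rfl fun i hi => by rw [Multiset.count_cons_of_ne (ne_of_mem_erase hi)]

@[to_additive]
theorem Multiset.prod_toFinset_eq_prod_fin {M : Type*} [CommMonoid M] {k : ℕ} {μ : Multiset ℕ}
    (hμ : ∀ a ∈ μ, 0 < a ∧ a ≤ k) {g : ℕ → ℕ → M} (hg : ∀ a, g a 0 = 1) :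
    ∏ a ∈ μ.toFinset, g a (μ.count a) = ∏ i : Fin k, g (i + 1) (μ.count ((i : ℕ) + 1)) := by
  rw [Fin.prod_univ_eq_prod_range (fun i => g (i + 1) (μ.count (i + 1))), range_eq_Ico,
    prod_Ico_add' (fun a => g a (μ.count a))]
  refine prod_subset (fun a ha => ?_) fun a _ ha => ?_
  · have := hμ a (Multiset.mem_toFinset.mp ha)
    simp only [Finset.mem_Ico]; omega
  · rw [Multiset.count_eq_zero.mpr (by simpa using ha), hg]

theorem Nat.Partition.parts_eq_singleton_of_mem {k : ℕ} {μ : k.Partition} (h : k ∈ μ.parts) :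
    μ.parts = {k} := by
  have hsum := μ.parts_sum
  rw [← Multiset.cons_erase h, Multiset.sum_cons] at hsum
  have : μ.parts.erase k = 0 := Multiset.eq_zero_of_forall_notMem fun i hi =>
    (μ.parts_pos (Multiset.mem_of_mem_erase hi)).ne' (by
      have := Multiset.le_sum_of_mem hi; omega)
  rw [← Multiset.cons_erase h, this]; rfl

theorem Nat.Partition.two_le_card_parts_of_ne_indiscrete {k : ℕ} {μ : k.Partition}
    (h : μ ≠ indiscrete k) :
    2 ≤ Multiset.card μ.parts := by
  by_contra! hcard
  rcases Nat.lt_succ_iff.mp hcard |>.lt_or_eq with hlt | hone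
  · have h0 : μ.parts = 0 := Multiset.card_eq_zero.mp (by omega)
    obtain rfl : k = 0 := by simpa [h0] using μ.parts_sum.symm
    exact h (Nat.Partition.ext (by simp))
  · obtain ⟨a, ha⟩ := Multiset.card_eq_one.mp hone
    obtain rfl : a = k := by simpa [ha] using μ.parts_sum
    have ha0 := μ.parts_pos (ha ▸ Multiset.mem_singleton_self a)
    exact h (Nat.Partition.ext (by rw [ha, indiscrete_parts ha0.ne']))

theorem Nat.Partition.sum_erase_indiscrete_sum_erase_parts {M : Type*} [AddCommMonoid M] (k : ℕ)
    (H : ℕ → Multiset ℕ → M) :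
    ∑ μ ∈ univ.erase (indiscrete k), ∑ j ∈ μ.parts.toFinset, H j (μ.parts.erase j) =
      ∑ j ∈ Ioo 0 k, ∑ ν : (k - j).Partition, H j ν.parts := by
  have mem_parts_iff {μ : k.Partition} {j : ℕ} (hμ : μ ≠ indiscrete k) :
      j ∈ μ.parts ↔ j ∈ Ioo 0 k ∧ j ∈ μ.parts := by
    refine ⟨fun hj => ⟨mem_Ioo.mpr ⟨μ.parts_pos hj, (μ.le_of_mem_parts hj).lt_of_ne ?_⟩, hj⟩,
      And.right⟩
    rintro rfl
    exact hμ (Nat.Partition.ext (by rw [parts_eq_singleton_of_mem hj,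
      indiscrete_parts (μ.parts_pos hj).ne']))
  calc _ = ∑ μ : k.Partition, ∑ j ∈ Ioo 0 k with j ∈ μ.parts, H j (μ.parts.erase j) := by
        refine (sum_congr rfl fun μ hμ => sum_congr ?_ fun _ _ => rfl).trans (sum_erase _ ?_)
        · ext j
          simpa using mem_parts_iff (ne_of_mem_erase hμ)
        · refine sum_eq_zero fun j hj => absurd hj ?_
          rw [mem_filter, mem_Ioo]
          rintro ⟨⟨hj0, hjk⟩, hj⟩
          rw [indiscrete_parts (by omega), Multiset.mem_singleton] at hj
          omega
    _ = ∑ j ∈ Ioo 0 k, ∑ μ : k.Partition with j ∈ μ.parts, H j (μ.parts.erase j) := by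
        simp_rw [sum_filter]
        exact sum_comm
    _ = _ := sum_congr rfl fun j hj => by
        rw [sum_subtype (p := fun μ : k.Partition => j ∈ μ.parts) _ (by simp)]
        exact Fintype.sum_equiv (partitionWithPartEquiv (mem_Ioo.mp hj).1
          (mem_Ioo.mp hj).2.le) _ _ fun μ => by simp

def Nat.Partition.ofCounts {k : ℕ} (r : Fin k → ℕ) (hr : ∑ i : Fin k, ((i : ℕ) + 1) * r i = k) :
    k.Partition where
  parts := ∑ i : Fin k, r i • {(i : ℕ) + 1}
  parts_pos {a} ha := by
    obtain ⟨i, -, hi⟩ := Multiset.mem_sum.mp ha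
    rw [Multiset.nsmul_singleton] at hi
    rw [Multiset.eq_of_mem_replicate hi]
    omega
  parts_sum := by
    simp only [Multiset.sum_sum, Multiset.sum_nsmul, Multiset.sum_singleton, smul_eq_mul]
    exact (sum_congr rfl fun i _ => mul_comm _ _).trans hr

theorem Nat.Partition.count_ofCounts_parts {k : ℕ} (r : Fin k → ℕ)
    (hr : ∑ i : Fin k, ((i : ℕ) + 1) * r i = k) (i : Fin k) :
    (ofCounts r hr).parts.count ((i : ℕ) + 1) = r i := by
  simp [ofCounts, Multiset.count_sum', Multiset.count_singleton, Fin.val_inj]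

section Field

variable {K : Type*} [Field K]

variable (K) in
noncomputable def waringCoeff (k : ℕ) (μ : Multiset ℕ) : K :=
  (-1) ^ k * k * ((Multiset.card μ - 1)! : ℕ) / ((∏ i ∈ μ.toFinset, (μ.count i)! : ℕ) : K)

variable (K) in
noncomputable def waringSum (k : ℕ) (e : ℕ → K) : K :=
  ∑ r ∈ (Fintype.piFinset fun _ : Fin k => Finset.range (k + 1)).filter
      (fun r => ∑ i : Fin k, ((i : ℕ) + 1) * r i = k),
    (-1 : K) ^ k * k * (((∑ i : Fin k, r i) - 1)! : ℕ) / ((∏ i : Fin k, (r i)! : ℕ) : K) *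
      ∏ i : Fin k, (-e ((i : ℕ) + 1)) ^ (r i)

theorem waringSum_eq_sum_partition (k : ℕ) (e : ℕ → K) :
    waringSum K k e =
      ∑ μ : k.Partition, waringCoeff K k μ.parts * (μ.parts.map fun j => -e j).prod := by
  have bounds (μ : k.Partition) : ∀ a ∈ μ.parts, 0 < a ∧ a ≤ k :=
    fun a ha => ⟨μ.parts_pos ha, μ.le_of_mem_parts ha⟩
  have weighted (μ : k.Partition) :
      ∑ i : Fin k, ((i : ℕ) + 1) * μ.parts.count ((i : ℕ) + 1) = k := by
    rw [← Multiset.sum_toFinset_eq_sum_fin (bounds μ) (g := fun a n => a * n)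
      fun _ => mul_zero _]
    calc _ = μ.parts.sum := by simp only [Finset.sum_multiset_count, smul_eq_mul, mul_comm]
      _ = k := μ.parts_sum
  symm
  refine sum_bij' (fun μ _ i => μ.parts.count ((i : ℕ) + 1))
    (fun r hr => Nat.Partition.ofCounts r (mem_filter.mp hr).2) ?_ (fun _ _ => mem_univ _) ?_ ?_ ?_
  · intro μ _
    rw [mem_filter, Fintype.mem_piFinset]
    refine ⟨fun i => mem_range.mpr (Nat.lt_succ_of_le ?_), weighted μ⟩
    exact (Nat.le_mul_of_pos_left _ (succ_pos _)).trans
      ((single_le_sum (fun _ _ => zero_le _) (mem_univ i)).trans (weighted μ).le)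
  · intro μ _
    refine Nat.Partition.ext ((Multiset.sum_toFinset_eq_sum_fin (bounds μ)
      (g := fun a n => n • ({a} : Multiset ℕ)) fun _ => zero_nsmul _).symm.trans ?_)
    exact Multiset.toFinset_sum_count_nsmul_eq _
  · intro r hr
    funext i
    exact Nat.Partition.count_ofCounts_parts r _ i
  · intro μ _
    rw [waringCoeff, Finset.prod_multiset_map_count,
      Multiset.prod_toFinset_eq_prod_fin (bounds μ) (g := fun a n => (-e a) ^ n)
        fun _ => pow_zero _,
      Multiset.prod_toFinset_eq_prod_fin (bounds μ) (g := fun _ n => n !) fun _ => factorial_zero,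
      ← Multiset.toFinset_sum_count_eq,
      Multiset.sum_toFinset_eq_sum_fin (bounds μ) (g := fun _ n => n) fun _ => rfl]

theorem continuous_waringSum [TopologicalSpace K] [IsTopologicalRing K] (k : ℕ) :
    Continuous (waringSum K k) := by
  unfold waringSum
  fun_prop

variable [CharZero K]

theorem sum_neg_one_pow_mul_waringCoeff_erase {k : ℕ} {μ : k.Partition}
    (hμ : 2 ≤ Multiset.card μ.parts) :
    ∑ j ∈ μ.parts.toFinset, (-1) ^ j * waringCoeff K (k - j) (μ.parts.erase j) =
      waringCoeff K k μ.parts := by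
  set ℓ := Multiset.card μ.parts
  set D : K := ((∏ i ∈ μ.parts.toFinset, (μ.parts.count i)! : ℕ) : K) with hD_def
  have hD : D ≠ 0 := Nat.cast_ne_zero.mpr (prod_ne_zero_iff.mpr fun _ _ => factorial_ne_zero _)
  have term (j) (hj : j ∈ μ.parts.toFinset) :
      (-1) ^ j * waringCoeff K (k - j) (μ.parts.erase j) =
        (-1) ^ k * ((ℓ - 2)! : ℕ) / D * (((k : K) - j) * μ.parts.count j) := by
    have hj : j ∈ μ.parts := Multiset.mem_toFinset.mp hj
    set ν := μ.parts.erase j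
    have hcons : j ::ₘ ν = μ.parts := Multiset.cons_erase hj
    have hD_cons : D = (ν.count j + 1 : ℕ) * ((∏ i ∈ ν.toFinset, (ν.count i)! : ℕ) : K) := by
      rw [← Nat.cast_mul, ← Multiset.prod_toFinset_factorial_count_cons, hcons]
    have hcount : μ.parts.count j = ν.count j + 1 := by rw [← hcons, Multiset.count_cons_self]
    have hcard : Multiset.card ν = ℓ - 1 := Multiset.card_erase_of_mem hj
    have hsign : (-1 : K) ^ j * (-1) ^ (k - j) = (-1) ^ k := by
      rw [← pow_add, Nat.add_sub_cancel' (μ.le_of_mem_parts hj)]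
    rw [waringCoeff, hD_cons, hcount, hcard, show ℓ - 1 - 1 = ℓ - 2 by omega,
      Nat.cast_sub (μ.le_of_mem_parts hj)]
    have hD_erase : ((∏ i ∈ ν.toFinset, (ν.count i)! : ℕ) : K) ≠ 0 :=
      Nat.cast_ne_zero.mpr (prod_ne_zero_iff.mpr fun _ _ => factorial_ne_zero _)
    field_simp
    linear_combination (((k : K) - j) * ((ℓ - 2)! : ℕ)) * hsign
  have hcount : ∑ j ∈ μ.parts.toFinset, (μ.parts.count j : K) = ℓ := by
    exact_mod_cast Multiset.toFinset_sum_count_eq μ.parts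
  have hsum : ∑ j ∈ μ.parts.toFinset, (j : K) * μ.parts.count j = k := by
    have := congrArg (Nat.cast : ℕ → K) (Finset.sum_multiset_count μ.parts)
    push_cast [μ.parts_sum, smul_eq_mul] at this
    rw [this]
    exact sum_congr rfl fun _ _ => mul_comm _ _
  have hfact : ((ℓ - 1)! : ℕ) = ((ℓ - 1 : ℕ) : K) * ((ℓ - 2)! : ℕ) := by
    rw [← Nat.cast_mul, show ℓ - 1 = ℓ - 2 + 1 by omega, factorial_succ]
  rw [sum_congr rfl term, ← mul_sum, waringCoeff, ← hD_def, hfact,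
    Nat.cast_sub (by omega : 1 ≤ ℓ)]
  simp only [sub_mul, sum_sub_distrib, ← mul_sum, hcount, hsum]
  field_simp
  ring

theorem Multiset.sum_map_pow_eq_sum_partition (s : Multiset K) {k : ℕ} (hk : 0 < k) :
    (s.map (· ^ k)).sum =
      ∑ μ : k.Partition, waringCoeff K k μ.parts * (μ.parts.map fun j => -s.esymm j).prod := by
  induction k using Nat.strong_induction_on with
  | _ k ih =>
  set P : Multiset ℕ → K := fun μ => (μ.map fun j => -s.esymm j).prod
  have lower : ∑ j ∈ Finset.Ioo 0 k, (-1) ^ j * s.esymm j * (s.map (· ^ (k - j))).sum =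
      -∑ j ∈ Finset.Ioo 0 k, ∑ ν : (k - j).Partition,
        (-1) ^ j * waringCoeff K (k - j) ν.parts * P (j ::ₘ ν.parts) := by
    rw [← sum_neg_distrib]
    refine sum_congr rfl fun j hj => ?_
    obtain ⟨hj0, hjk⟩ := Finset.mem_Ioo.mp hj
    rw [ih (k - j) (by omega) (by omega), mul_sum, ← sum_neg_distrib]
    refine sum_congr rfl fun ν _ => ?_
    simp only [P, Multiset.map_cons, Multiset.prod_cons]
    ring
  have top : waringCoeff K k {k} * P {k} = (-1) ^ (k + 1) * k * s.esymm k := by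
    simp [waringCoeff, P, pow_succ]
  -- the partition `{k}` yields the `k e_k` term of Newton's identity, all others the lower terms
  rw [sum_map_pow_eq_mul_esymm_sub_sum s hk, lower, sub_neg_eq_add,
    ← Nat.Partition.sum_erase_indiscrete_sum_erase_parts k
      fun j ν => (-1) ^ j * waringCoeff K (k - j) ν * P (j ::ₘ ν),
    ← add_sum_erase _ _ (mem_univ (Nat.Partition.indiscrete k)),
    Nat.Partition.indiscrete_parts hk.ne', top]
  congr 1
  refine sum_congr rfl fun μ hμ => ?_
  calc _ = ∑ j ∈ μ.parts.toFinset,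
          (-1) ^ j * waringCoeff K (k - j) (μ.parts.erase j) * P μ.parts :=
        sum_congr rfl fun j hj => by rw [Multiset.cons_erase (Multiset.mem_toFinset.mp hj)]
    _ = _ := by
      rw [← sum_mul, sum_neg_one_pow_mul_waringCoeff_erase
        (Nat.Partition.two_le_card_parts_of_ne_indiscrete (ne_of_mem_erase hμ))]

theorem Multiset.sum_map_pow_eq_waringSum (s : Multiset K) {k : ℕ} (hk : 0 < k) :
    (s.map (· ^ k)).sum = waringSum K k s.esymm := by
  rw [waringSum_eq_sum_partition]
  exact s.sum_map_pow_eq_sum_partition hk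

end Field

theorem tendsto_esymm_map_range {R : Type*} [NormedCommRing R] [NormOneClass R] [CompleteSpace R]
    {lam : ℕ → R} (h : Summable fun n => ‖lam n‖) (j : ℕ) :
    Tendsto (fun N => ((range N).val.map lam).esymm j) atTop
      (𝓝 (∑' S : {S : Finset ℕ // S.card = j}, ∏ i ∈ S.1, lam i)) := by
  have hS := hasSum_subtype_iff_indicator (s := {S : Finset ℕ | S.card = j}).mp
    ((summable_finsetProd_of_summable_norm h).subtype _).hasSum
  refine (hS.comp (tendsto_finset_powerset_atTop_atTop.comp tendsto_finset_range)).congr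
    fun N => ?_
  simp only [Function.comp_apply, Finset.esymm_map_val, powersetCard_eq_filter, sum_filter,
    Set.indicator_apply, Set.mem_ofPred_eq]

theorem summable_pow_of_summable_norm {ι R : Type*} [NormedRing R] [CompleteSpace R] {f : ι → R}
    (h : Summable fun i => ‖f i‖) {k : ℕ} (hk : k ≠ 0) : Summable fun i => f i ^ k := by
  refine h.of_norm_bounded_eventually ?_
  filter_upwards [h.tendsto_cofinite_zero.eventually (eventually_le_nhds zero_lt_one)] with i hi
  exact (norm_pow_le' _ (Nat.pos_of_ne_zero hk)).trans (pow_le_of_le_one (norm_nonneg _) hi hk)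

/-- Waring's closed formula expressing the power sums in terms of
the elementary symmetric sums of an absolutely summable complex sequence. -/
theorem waring_formula_infinite
    (lam : ℕ → ℂ) (hsum : Summable fun n => ‖lam n‖)
    (p : ℕ → ℂ) (hp : ∀ k, 1 ≤ k → p k = ∑' n, lam n ^ k)
    (e : ℕ → ℂ) (he : ∀ k, e k = ∑' S : {S : Finset ℕ // S.card = k}, ∏ i ∈ S.1, lam i) :
    ∀ k : ℕ, 1 ≤ k →
      p k = ∑ r ∈ (Fintype.piFinset fun _ : Fin k => Finset.range (k + 1)).filter
          (fun r => ∑ i : Fin k, ((i : ℕ) + 1) * r i = k),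
        (-1 : ℂ) ^ k * k * (((∑ i : Fin k, r i) - 1)! : ℕ) / ((∏ i : Fin k, (r i)! : ℕ) : ℂ) *
          ∏ i : Fin k, (-e ((i : ℕ) + 1)) ^ (r i) := by
  intro k hk
  have finite (N : ℕ) :
      ∑ n ∈ range N, lam n ^ k = waringSum ℂ k ((range N).val.map lam).esymm := by
    rw [← Multiset.sum_map_pow_eq_waringSum _ hk, Multiset.map_map]
    rfl
  have lhs : Tendsto (fun N => ∑ n ∈ range N, lam n ^ k) atTop (𝓝 (p k)) :=
    hp k hk ▸ (summable_pow_of_summable_norm hsum (by omega)).hasSum.tendsto_sum_nat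
  have rhs : Tendsto (fun N => waringSum ℂ k ((range N).val.map lam).esymm) atTop
      (𝓝 (waringSum ℂ k e)) :=
    ((continuous_waringSum k).tendsto e).comp
      (tendsto_pi_nhds.mpr fun j => by simpa only [he] using tendsto_esymm_map_range hsum j)
  exact tendsto_nhds_unique (lhs.congr finite) rhs
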